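/- Let h ∈ H_{r,n} with r < n, h(r) = n, and no i ∈ [r] with h(i) = r. Let g = h|_{[r−1]∪{n}} ∈ H_{r−1,n}. Then for every N ≥ 1, csf_q^N(h) = [n−r+1]_q · csf_q^N(g). (This is formula (73a) of Corollary 48(1), expressed via chromatic quasisymmetric functions using the paper's generalized Shareshian–Wachs theorem.) -/
import Mathlib


namespace GenHess

open scoped Classical

noncomputable section

/-- The vertex set `I ∪ {n}` of the weighted graph of a generalized Hessenberg function. -/
def verts (n : ℕ) (I : Finset ℕ) : Finset ℕ := insert n I

/-- `h : I ∪ {n} → I ∪ {n}` is a generalized Hessenberg function for `(I, n)`,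
with `I ⊆ {1, …, n-1}`, `h i ≥ i`, and `h` weakly increasing on `I ∪ {n}`. -/
def IsGenHess (n : ℕ) (I : Finset ℕ) (h : ℕ → ℕ) : Prop :=
  (∀ i ∈ I, 1 ≤ i ∧ i ≤ n - 1) ∧
  (∀ i ∈ verts n I, h i ∈ verts n I) ∧
  (∀ i ∈ verts n I, i ≤ h i) ∧
  (∀ i ∈ verts n I, ∀ j ∈ verts n I, i ≤ j → h i ≤ h j)

/-- The weight `w_h(i_k) = i_k - i_{k-1}` of a vertex: `v` minus the largest vertex
below `v` (or `0` if there is none). -/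
def wt (n : ℕ) (I : Finset ℕ) (v : ℕ) : ℕ :=
  v - ((verts n I).filter (fun u => u < v)).sup id

/-- A proper coloring of the weighted graph `(Γ_h, w_h)` with colors in `[N]`:
each vertex `v` gets a set of colors of size `w_h(v)`, and adjacent vertices get
disjoint color sets (there is an edge `{i,j}` whenever `i < j ≤ h i`). -/
def IsProper {N : ℕ} (n : ℕ) (I : Finset ℕ) (h : ℕ → ℕ)
    (γ : {x // x ∈ verts n I} → Finset (Fin N)) : Prop :=
  (∀ v : {x // x ∈ verts n I}, (γ v).card = wt n I v.val) ∧
  ∀ v u : {x // x ∈ verts n I}, v.val < u.val → u.val ≤ h v.val → Disjoint (γ v) (γ u)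

/-- The ascent statistic `asc_h(γ) = Σ_{edges i<j} #{(a,b) ∈ γ(i)×γ(j) : a < b}`. -/
def asc {N : ℕ} (n : ℕ) (I : Finset ℕ) (h : ℕ → ℕ)
    (γ : {x // x ∈ verts n I} → Finset (Fin N)) : ℕ :=
  ∑ v : {x // x ∈ verts n I}, ∑ u : {x // x ∈ verts n I},
    if v.val < u.val ∧ u.val ≤ h v.val then
      ((γ v ×ˢ γ u).filter fun ab => ab.1 < ab.2).card
    else 0

/-- The truncated chromatic quasisymmetric function `csf_q^N(h)`, as an element of
`ℤ[x_1,…,x_N][q]` (the outer `Polynomial.X` is `q`). -/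
def csf (n : ℕ) (I : Finset ℕ) (h : ℕ → ℕ) (N : ℕ) :
    Polynomial (MvPolynomial (Fin N) ℤ) :=
  ∑ γ ∈ Finset.univ.filter
      (fun γ : {x // x ∈ verts n I} → Finset (Fin N) => IsProper n I h γ),
    Polynomial.C (∏ v : {x // x ∈ verts n I}, ∏ a ∈ γ v, MvPolynomial.X a) *
      Polynomial.X ^ asc n I h γ

/-- The `q`-integer `[m]_q = 1 + q + ⋯ + q^{m-1}`. -/
def qNum (R : Type) [CommRing R] (m : ℕ) : Polynomial R :=
  ∑ i ∈ Finset.range m, Polynomial.X ^ i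

/-- The `q`-factorial `[m]_q!`. -/
def qFact (R : Type) [CommRing R] : ℕ → Polynomial R
  | 0 => 1
  | m + 1 => qNum R (m + 1) * qFact R m

/-- The elementary symmetric polynomial `e_m(x_1,…,x_N)`, viewed as a constant
polynomial in `q`. -/
def esym (N m : ℕ) : Polynomial (MvPolynomial (Fin N) ℤ) :=
  Polynomial.C (MvPolynomial.esymm (Fin N) ℤ m)

end

end GenHess

open GenHess Finset

namespace GHAux

noncomputable section
open scoped Classical

variable {N : ℕ}

/-- number of ascending pairs between two color sets -/
def cnt (s t : Finset (Fin N)) : ℕ := ((s ×ˢ t).filter fun ab => ab.1 < ab.2).card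

lemma cnt_union {s t t' : Finset (Fin N)} (h : Disjoint t t') :
    cnt s (t ∪ t') = cnt s t + cnt s t' := by
  classical
  unfold cnt
  rw [Finset.product_union, Finset.filter_union, Finset.card_union_of_disjoint]
  exact Finset.disjoint_filter_filter (Finset.disjoint_product.mpr (Or.inr h))

lemma cnt_singleton (a : Fin N) (t : Finset (Fin N)) :
    cnt {a} t = (t.filter fun b => a < b).card := by
  classical
  unfold cnt
  rw [Finset.singleton_product, Finset.filter_map, Finset.card_map]
  rfl

/-- extend a coloring on a subtype to all of ℕ -/
def ext {V : Finset ℕ} (γ : {x // x ∈ V} → Finset (Fin N)) : ℕ → Finset (Fin N) :=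
  fun x => if hx : x ∈ V then γ ⟨x, hx⟩ else ∅

lemma ext_val {V : Finset ℕ} (γ : {x // x ∈ V} → Finset (Fin N)) (v : {x // x ∈ V}) :
    ext γ v.val = γ v := by
  unfold ext
  rw [dif_pos v.2]

lemma asc_eq (n : ℕ) (I : Finset ℕ) (h : ℕ → ℕ)
    (γ : {x // x ∈ verts n I} → Finset (Fin N)) :
    asc n I h γ = ∑ v ∈ verts n I, ∑ u ∈ verts n I,
      if v < u ∧ u ≤ h v then cnt (ext γ v) (ext γ u) else 0 := by
  unfold asc
  rw [← Finset.sum_attach (verts n I) (fun v => ∑ u ∈ verts n I, if v < u ∧ u ≤ h v then cnt (ext γ v) (ext γ u) else 0)]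
  rw [Finset.univ_eq_attach]
  refine Finset.sum_congr rfl fun v _ => ?_
  rw [← Finset.sum_attach (verts n I) (fun u => if v.val < u ∧ u ≤ h v.val then cnt (ext γ v.val) (ext γ u) else 0)]
  refine Finset.sum_congr rfl fun u _ => ?_
  rw [ext_val, ext_val]
  rfl

lemma prod_eq (n : ℕ) (I : Finset ℕ)
    (γ : {x // x ∈ verts n I} → Finset (Fin N)) :
    (∏ v : {x // x ∈ verts n I}, ∏ a ∈ γ v, (MvPolynomial.X a : MvPolynomial (Fin N) ℤ))
      = ∏ v ∈ verts n I, ∏ a ∈ ext γ v, MvPolynomial.X a := by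
  rw [← Finset.prod_attach (verts n I) (fun v => ∏ a ∈ ext γ v, (MvPolynomial.X a : MvPolynomial (Fin N) ℤ))]
  rw [Finset.univ_eq_attach]
  exact Finset.prod_congr rfl fun v _ => by rw [ext_val]

lemma sup_Icc_one (s : ℕ) : (Finset.Icc 1 s).sup id = s := by
  rcases Nat.eq_zero_or_pos s with hs | hs
  · subst hs; simp
  · refine le_antisymm (Finset.sup_le fun x hx => (Finset.mem_Icc.mp hx).2) ?_
    exact Finset.le_sup (f := id) (Finset.mem_Icc.mpr ⟨hs, le_refl s⟩)

lemma verts_filter_top {n s : ℕ} (hsn : s < n) :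
    (verts n (Finset.Icc 1 s)).filter (fun u => u < n) = Finset.Icc 1 s := by
  ext u
  simp only [verts, Finset.mem_filter, Finset.mem_insert, Finset.mem_Icc]
  omega

lemma wt_top {n s : ℕ} (hsn : s < n) : wt n (Finset.Icc 1 s) n = n - s := by
  unfold wt
  rw [verts_filter_top hsn, sup_Icc_one]

lemma wt_low {n s v : ℕ} (hsn : s < n) (hv : v ∈ Finset.Icc 1 s) :
    wt n (Finset.Icc 1 s) v = 1 := by
  rw [Finset.mem_Icc] at hv
  have : (verts n (Finset.Icc 1 s)).filter (fun u => u < v) = Finset.Icc 1 (v - 1) := by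
    ext u
    simp only [verts, Finset.mem_filter, Finset.mem_insert, Finset.mem_Icc]
    omega
  unfold wt
  rw [this, sup_Icc_one]
  omega

lemma sum_filter_gt {M : Type*} [AddCommMonoid M] (t : Finset (Fin N)) (g : ℕ → M) :
    ∑ a ∈ t, g ((t.filter fun b => a < b).card) = ∑ i ∈ Finset.range t.card, g i := by
  classical
  set φ : Fin N → ℕ := fun a => (t.filter fun b => a < b).card with hφ
  have hanti : ∀ a ∈ t, ∀ b ∈ t, a < b → φ b < φ a := by
    intro a ha b hb hab
    refine Finset.card_lt_card ?_
    constructor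
    · intro x hx
      rw [Finset.mem_filter] at hx ⊢
      exact ⟨hx.1, lt_trans hab hx.2⟩
    · intro hsub
      have : b ∈ t.filter fun x => b < x := hsub (Finset.mem_filter.mpr ⟨hb, hab⟩)
      exact absurd (Finset.mem_filter.mp this).2 (lt_irrefl b)
  have hinj : ∀ a ∈ t, ∀ b ∈ t, φ a = φ b → a = b := by
    intro a ha b hb hfab
    rcases lt_trichotomy a b with hlt | heq | hlt
    · exact absurd hfab (Nat.ne_of_lt' (hanti a ha b hb hlt))
    · exact heq
    · exact absurd hfab.symm (Nat.ne_of_lt' (hanti b hb a ha hlt))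
  have himg : t.image φ = Finset.range t.card := by
    refine Finset.eq_of_subset_of_card_le ?_ ?_
    · intro i hi
      rw [Finset.mem_image] at hi
      obtain ⟨a, ha, rfl⟩ := hi
      rw [Finset.mem_range]
      have hsub : (t.filter fun b => a < b) ⊆ t.erase a := by
        intro x hx
        rw [Finset.mem_filter] at hx
        exact Finset.mem_erase.mpr ⟨(ne_of_lt hx.2).symm, hx.1⟩
      calc φ a ≤ (t.erase a).card := Finset.card_le_card hsub
        _ < t.card := Finset.card_erase_lt_of_mem ha
    · rw [Finset.card_range, Finset.card_image_of_injOn hinj]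
  rw [← himg, Finset.sum_image hinj]

lemma ext_mem {V : Finset ℕ} (γ : {x // x ∈ V} → Finset (Fin N)) {x : ℕ} (hx : x ∈ V) :
    ext γ x = γ ⟨x, hx⟩ := dif_pos hx

lemma ext_notMem {V : Finset ℕ} (γ : {x // x ∈ V} → Finset (Fin N)) {x : ℕ} (hx : x ∉ V) :
    ext γ x = ∅ := dif_neg hx

lemma filter_lt_singleton_union (a : Fin N) (t : Finset (Fin N)) :
    (({a} ∪ t).filter fun b => a < b) = t.filter fun b => a < b := by
  rw [Finset.filter_union, Finset.filter_singleton, if_neg (lt_irrefl a), Finset.empty_union]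

/-- forward map on colorings: merge the colors of `r` and `n` at vertex `n`. -/
def fwdC (n r : ℕ) (γ : {x // x ∈ verts n (Finset.Icc 1 r)} → Finset (Fin N)) :
    {x // x ∈ verts n (Finset.Icc 1 (r - 1))} → Finset (Fin N) :=
  fun v => if v.val = n then ext γ r ∪ ext γ n else ext γ v.val

/-- the color of vertex `r` (when it is a singleton) -/
def fwda (n r : ℕ) (d : Fin N) (γ : {x // x ∈ verts n (Finset.Icc 1 r)} → Finset (Fin N)) :
    Fin N :=
  if hne : (ext γ r).Nonempty then (ext γ r).min' hne else d

/-- backward map: give color `a` to vertex `r` and the rest to `n`. -/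
def bwdC (n r : ℕ) (γ' : {x // x ∈ verts n (Finset.Icc 1 (r - 1))} → Finset (Fin N))
    (a : Fin N) : {x // x ∈ verts n (Finset.Icc 1 r)} → Finset (Fin N) :=
  fun v => if v.val = r then {a} else if v.val = n then (ext γ' n).erase a else ext γ' v.val

end
end GHAux

open GHAux

/-- Corollary 48(1), eq. (73a): if `h r = n` and nothing maps to `r`, then
`csf(h) = [n-r+1]_q csf(h|_{[r-1]∪{n}})`. -/
theorem csf_proj_bundle (n r : ℕ) (h : ℕ → ℕ) (hgen : IsGenHess n (Finset.Icc 1 r) h)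
    (hr : 1 ≤ r) (hrn : r < n) (htop : h r = n)
    (hempty : ∀ i ∈ Finset.Icc 1 r, h i ≠ r)
    (N : ℕ) (hN : 1 ≤ N) :
    csf n (Finset.Icc 1 r) h N =
      qNum (MvPolynomial (Fin N) ℤ) (n - r + 1) * csf n (Finset.Icc 1 (r - 1)) h N := by
  classical
  obtain ⟨hIb, hmem, hge, hmono⟩ := hgen
  -- basic membership facts
  have hrV : r ∈ verts n (Finset.Icc 1 r) := by
    simp only [verts, Finset.mem_insert, Finset.mem_Icc]; omega
  have hnV : n ∈ verts n (Finset.Icc 1 r) := Finset.mem_insert_self _ _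
  have hnV' : n ∈ verts n (Finset.Icc 1 (r - 1)) := Finset.mem_insert_self _ _
  have hsub : ∀ x, x ∈ verts n (Finset.Icc 1 (r - 1)) → x ∈ verts n (Finset.Icc 1 r) := by
    intro x; simp only [verts, Finset.mem_insert, Finset.mem_Icc]; omega
  have hmemV : ∀ x, x ∈ verts n (Finset.Icc 1 r) ↔ (x = n ∨ (1 ≤ x ∧ x ≤ r)) := by
    intro x; simp only [verts, Finset.mem_insert, Finset.mem_Icc]
  have hmemV' : ∀ x, x ∈ verts n (Finset.Icc 1 (r - 1)) ↔ (x = n ∨ (1 ≤ x ∧ x ≤ r - 1)) := by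
    intro x; simp only [verts, Finset.mem_insert, Finset.mem_Icc]
  have hVsplit : verts n (Finset.Icc 1 r) = insert r (verts n (Finset.Icc 1 (r - 1))) := by
    ext x
    simp only [verts, Finset.mem_insert, Finset.mem_Icc]
    omega
  have hrV' : r ∉ verts n (Finset.Icc 1 (r - 1)) := by
    simp only [verts, Finset.mem_insert, Finset.mem_Icc]; omega
  have hnnotI' : n ∉ Finset.Icc 1 (r - 1) := by
    simp only [Finset.mem_Icc]; omega
  have hhn : ∀ x ∈ verts n (Finset.Icc 1 r), x ≤ n := by
    intro x hx; rw [hmemV] at hx; omega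
  -- key fact about h on small vertices
  have hkey : ∀ v, 1 ≤ v → v ≤ r - 1 → (h v = n ∨ h v ≤ r - 1) := by
    intro v h1 h2
    have hvV : v ∈ verts n (Finset.Icc 1 r) := by rw [hmemV]; omega
    have := hmem v hvV
    rw [hmemV] at this
    have hne := hempty v (Finset.mem_Icc.mpr (by omega))
    omega

  -- weight facts
  have hr1n : r - 1 < n := by omega
  have hwt'n : wt n (Finset.Icc 1 (r - 1)) n = n - r + 1 := by
    rw [wt_top hr1n]; omega
  have hwtn : wt n (Finset.Icc 1 r) n = n - r := wt_top hrn
  set d : Fin N := ⟨0, hN⟩ with hd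
  -- disjointness of colors at r and n
  have hdisj_rn : ∀ γ : {x // x ∈ verts n (Finset.Icc 1 r)} → Finset (Fin N),
      IsProper n (Finset.Icc 1 r) h γ → Disjoint (ext γ r) (ext γ n) := by
    intro γ hγ
    rw [ext_mem γ hrV, ext_mem γ hnV]
    exact hγ.2 ⟨r, hrV⟩ ⟨n, hnV⟩ hrn (by rw [htop])
  -- the color set of r is the singleton on fwda
  have hsing : ∀ γ : {x // x ∈ verts n (Finset.Icc 1 r)} → Finset (Fin N),
      IsProper n (Finset.Icc 1 r) h γ → ext γ r = {fwda n r d γ} := by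
    intro γ hγ
    have hc : (ext γ r).card = 1 := by
      rw [ext_mem γ hrV, hγ.1 ⟨r, hrV⟩]
      exact wt_low hrn (Finset.mem_Icc.mpr ⟨hr, le_refl r⟩)
    obtain ⟨b, hb⟩ := Finset.card_eq_one.mp hc
    rw [hb]
    simp [fwda, hb]
  have hcard_r : ∀ γ : {x // x ∈ verts n (Finset.Icc 1 r)} → Finset (Fin N),
      IsProper n (Finset.Icc 1 r) h γ → (ext γ r).card = 1 := by
    intro γ hγ
    rw [ext_mem γ hrV, hγ.1 ⟨r, hrV⟩]
    exact wt_low hrn (Finset.mem_Icc.mpr ⟨hr, le_refl r⟩)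
  have hcard_n : ∀ γ : {x // x ∈ verts n (Finset.Icc 1 r)} → Finset (Fin N),
      IsProper n (Finset.Icc 1 r) h γ → (ext γ n).card = n - r := by
    intro γ hγ
    rw [ext_mem γ hnV, hγ.1 ⟨n, hnV⟩]
    exact hwtn
  -- ext values of fwdC
  have hext_fwd_n : ∀ γ : {x // x ∈ verts n (Finset.Icc 1 r)} → Finset (Fin N),
      ext (fwdC n r γ) n = ext γ r ∪ ext γ n := by
    intro γ; rw [ext_mem _ hnV']; simp [fwdC]
  have hext_fwd_lo : ∀ γ : {x // x ∈ verts n (Finset.Icc 1 r)} → Finset (Fin N),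
      ∀ x, 1 ≤ x → x ≤ r - 1 → ext (fwdC n r γ) x = ext γ x := by
    intro γ x h1 h2
    have hx : x ∈ verts n (Finset.Icc 1 (r - 1)) := by rw [hmemV']; omega
    rw [ext_mem _ hx]
    have : x ≠ n := by omega
    simp [fwdC, this]
  -- ext values of bwdC
  have hext_bwd_r : ∀ (γ' : {x // x ∈ verts n (Finset.Icc 1 (r - 1))} → Finset (Fin N))
      (a : Fin N), ext (bwdC n r γ' a) r = {a} := by
    intro γ' a; rw [ext_mem _ hrV]; simp [bwdC]
  have hext_bwd_n : ∀ (γ' : {x // x ∈ verts n (Finset.Icc 1 (r - 1))} → Finset (Fin N))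
      (a : Fin N), ext (bwdC n r γ' a) n = (ext γ' n).erase a := by
    intro γ' a; rw [ext_mem _ hnV]
    have h1 : n ≠ r := by omega
    simp [bwdC, h1]
  have hext_bwd_lo : ∀ (γ' : {x // x ∈ verts n (Finset.Icc 1 (r - 1))} → Finset (Fin N))
      (a : Fin N), ∀ x, 1 ≤ x → x ≤ r - 1 → ext (bwdC n r γ' a) x = ext γ' x := by
    intro γ' a x h1 h2
    have hx : x ∈ verts n (Finset.Icc 1 r) := by rw [hmemV]; omega
    rw [ext_mem _ hx]
    have h3 : x ≠ r := by omega
    have h4 : x ≠ n := by omega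
    simp [bwdC, h3, h4]
  -- forward properness
  have hfwd_proper : ∀ γ : {x // x ∈ verts n (Finset.Icc 1 r)} → Finset (Fin N),
      IsProper n (Finset.Icc 1 r) h γ → IsProper n (Finset.Icc 1 (r - 1)) h (fwdC n r γ) := by
    intro γ hγ
    constructor
    · intro v
      by_cases hv : v.val = n
      · have e1 : fwdC n r γ v = ext γ r ∪ ext γ n := by simp [fwdC, hv]
        have hw : wt n (Finset.Icc 1 (r - 1)) v.val = n - r + 1 := by rw [hv]; exact hwt'n
        rw [e1, Finset.card_union_of_disjoint (hdisj_rn γ hγ), hcard_r γ hγ, hcard_n γ hγ, hw]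
        omega
      · have hvI : 1 ≤ v.val ∧ v.val ≤ r - 1 := by
          rcases (hmemV' v.val).mp v.2 with h1 | h1
          · exact absurd h1 hv
          · exact h1
        have hvV : v.val ∈ verts n (Finset.Icc 1 r) := hsub _ v.2
        have e1 : fwdC n r γ v = γ ⟨v.val, hvV⟩ := by
          simp only [fwdC, if_neg hv]; exact ext_mem γ hvV
        have hc : (γ ⟨v.val, hvV⟩).card = wt n (Finset.Icc 1 r) v.val := hγ.1 ⟨v.val, hvV⟩
        rw [e1, hc, wt_low hrn (Finset.mem_Icc.mpr (by omega))]
        exact (wt_low hr1n (Finset.mem_Icc.mpr hvI)).symm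
    · intro v u hvu hhv
      by_cases hu : u.val = n
      · have hvn : v.val < n := by omega
        have hvI : 1 ≤ v.val ∧ v.val ≤ r - 1 := by
          rcases (hmemV' v.val).mp v.2 with h1 | h1
          · omega
          · exact h1
        have hvV : v.val ∈ verts n (Finset.Icc 1 r) := hsub _ v.2
        have e1 : fwdC n r γ v = γ ⟨v.val, hvV⟩ := by
          simp only [fwdC, if_neg (by omega : ¬ v.val = n)]; exact ext_mem γ hvV
        have e2 : fwdC n r γ u = ext γ r ∪ ext γ n := by simp [fwdC, hu]
        have hhvn : n ≤ h v.val := by omega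
        rw [e1, e2]
        refine Finset.disjoint_union_right.mpr ⟨?_, ?_⟩
        · rw [ext_mem γ hrV]
          exact hγ.2 ⟨v.val, hvV⟩ ⟨r, hrV⟩ (show v.val < r by omega)
            (show r ≤ h v.val by omega)
        · rw [ext_mem γ hnV]
          exact hγ.2 ⟨v.val, hvV⟩ ⟨n, hnV⟩ hvn hhvn
      · have huI : 1 ≤ u.val ∧ u.val ≤ r - 1 := by
          rcases (hmemV' u.val).mp u.2 with h1 | h1
          · exact absurd h1 hu
          · exact h1
        have hvn : v.val ≠ n := by omega
        have hvV : v.val ∈ verts n (Finset.Icc 1 r) := hsub _ v.2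
        have huV : u.val ∈ verts n (Finset.Icc 1 r) := hsub _ u.2
        have e1 : fwdC n r γ v = γ ⟨v.val, hvV⟩ := by
          simp only [fwdC, if_neg hvn]; exact ext_mem γ hvV
        have e2 : fwdC n r γ u = γ ⟨u.val, huV⟩ := by
          simp only [fwdC, if_neg hu]; exact ext_mem γ huV
        rw [e1, e2]
        exact hγ.2 ⟨v.val, hvV⟩ ⟨u.val, huV⟩ hvu hhv
  -- backward properness
  have hbwd_proper : ∀ (γ' : {x // x ∈ verts n (Finset.Icc 1 (r - 1))} → Finset (Fin N))
      (a : Fin N), IsProper n (Finset.Icc 1 (r - 1)) h γ' → a ∈ γ' ⟨n, hnV'⟩ →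
      IsProper n (Finset.Icc 1 r) h (bwdC n r γ' a) := by
    intro γ' a hγ' ha
    have haext : a ∈ ext γ' n := by rw [ext_mem γ' hnV']; exact ha
    constructor
    · intro v
      by_cases hv : v.val = r
      · have e1 : bwdC n r γ' a v = {a} := by simp [bwdC, hv]
        have hw : wt n (Finset.Icc 1 r) v.val = 1 := by
          rw [hv]; exact wt_low hrn (Finset.mem_Icc.mpr ⟨hr, le_refl r⟩)
        rw [e1, hw]
        simp
      · by_cases hv2 : v.val = n
        · have e1 : bwdC n r γ' a v = (ext γ' n).erase a := by
            simp only [bwdC, if_neg hv, if_pos hv2]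
          have hc : (ext γ' n).card = n - r + 1 := by
            rw [ext_mem γ' hnV', hγ'.1 ⟨n, hnV'⟩]; exact hwt'n
          have hw : wt n (Finset.Icc 1 r) v.val = n - r := by rw [hv2]; exact hwtn
          rw [e1, Finset.card_erase_of_mem haext, hc, hw]
          omega
        · have hvI : 1 ≤ v.val ∧ v.val ≤ r - 1 := by
            rcases (hmemV v.val).mp v.2 with h1 | h1
            · exact absurd h1 hv2
            · omega
          have hvV' : v.val ∈ verts n (Finset.Icc 1 (r - 1)) := by rw [hmemV']; omega
          have e1 : bwdC n r γ' a v = γ' ⟨v.val, hvV'⟩ := by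
            simp only [bwdC, if_neg hv, if_neg hv2]; exact ext_mem γ' hvV'
          have hc : (γ' ⟨v.val, hvV'⟩).card = wt n (Finset.Icc 1 (r - 1)) v.val :=
            hγ'.1 ⟨v.val, hvV'⟩
          rw [e1, hc, wt_low hr1n (Finset.mem_Icc.mpr hvI)]
          exact (wt_low hrn (Finset.mem_Icc.mpr (by omega))).symm
    · intro v u hvu hhv
      have hun : u.val ≤ n := hhn u.val (u.2)
      by_cases hu : u.val = r
      · -- u = r, v < r
        have hvI : 1 ≤ v.val ∧ v.val ≤ r - 1 := by
          rcases (hmemV v.val).mp v.2 with h1 | h1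
          · omega
          · omega
        have hvV' : v.val ∈ verts n (Finset.Icc 1 (r - 1)) := by rw [hmemV']; omega
        have e1 : bwdC n r γ' a v = γ' ⟨v.val, hvV'⟩ := by
          simp only [bwdC, if_neg (by omega : ¬ v.val = r), if_neg (by omega : ¬ v.val = n)]
          exact ext_mem γ' hvV'
        have e2 : bwdC n r γ' a u = {a} := by simp [bwdC, hu]
        have hhvn : h v.val = n := by
          rcases hkey v.val hvI.1 hvI.2 with h1 | h1
          · exact h1
          · omega
        have hdisj : Disjoint (γ' ⟨v.val, hvV'⟩) (γ' ⟨n, hnV'⟩) :=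
          hγ'.2 ⟨v.val, hvV'⟩ ⟨n, hnV'⟩ (show v.val < n by omega)
            (show n ≤ h v.val by omega)
        rw [e1, e2, Finset.disjoint_singleton_right]
        exact fun hmem' => (Finset.disjoint_left.mp hdisj hmem') ha
      · by_cases hu2 : u.val = n
        · have e2 : bwdC n r γ' a u = (ext γ' n).erase a := by
            simp only [bwdC, if_neg hu, if_pos hu2]
          by_cases hv : v.val = r
          · have e1 : bwdC n r γ' a v = {a} := by simp [bwdC, hv]
            rw [e1, e2, Finset.disjoint_singleton_left]
            exact Finset.notMem_erase a _
          · have hvI : 1 ≤ v.val ∧ v.val ≤ r - 1 := by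
              rcases (hmemV v.val).mp v.2 with h1 | h1
              · omega
              · omega
            have hvV' : v.val ∈ verts n (Finset.Icc 1 (r - 1)) := by rw [hmemV']; omega
            have e1 : bwdC n r γ' a v = γ' ⟨v.val, hvV'⟩ := by
              simp only [bwdC, if_neg hv, if_neg (by omega : ¬ v.val = n)]
              exact ext_mem γ' hvV'
            have hdisj : Disjoint (γ' ⟨v.val, hvV'⟩) (γ' ⟨n, hnV'⟩) :=
              hγ'.2 ⟨v.val, hvV'⟩ ⟨n, hnV'⟩ (show v.val < n by omega)
                (show n ≤ h v.val by omega)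
            rw [e1, e2, ext_mem γ' hnV']
            exact hdisj.mono_right (Finset.erase_subset a _)
        · -- u ≤ r - 1
          have huI : 1 ≤ u.val ∧ u.val ≤ r - 1 := by
            rcases (hmemV u.val).mp u.2 with h1 | h1
            · exact absurd h1 hu2
            · omega
          have hvI : 1 ≤ v.val ∧ v.val ≤ r - 1 := by
            rcases (hmemV v.val).mp v.2 with h1 | h1
            · omega
            · omega
          have hvV' : v.val ∈ verts n (Finset.Icc 1 (r - 1)) := by rw [hmemV']; omega
          have huV' : u.val ∈ verts n (Finset.Icc 1 (r - 1)) := by rw [hmemV']; omega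
          have e1 : bwdC n r γ' a v = γ' ⟨v.val, hvV'⟩ := by
            simp only [bwdC, if_neg (by omega : ¬ v.val = r), if_neg (by omega : ¬ v.val = n)]
            exact ext_mem γ' hvV'
          have e2 : bwdC n r γ' a u = γ' ⟨u.val, huV'⟩ := by
            simp only [bwdC, if_neg hu, if_neg hu2]; exact ext_mem γ' huV'
          rw [e1, e2]
          exact hγ'.2 ⟨v.val, hvV'⟩ ⟨u.val, huV'⟩ hvu hhv

  -- splitting sums over the vertex sets
  have hEr : ∀ F : ℕ → ℕ, (∑ v ∈ verts n (Finset.Icc 1 r), F v)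
      = F r + ∑ v ∈ verts n (Finset.Icc 1 (r - 1)), F v := by
    intro F; rw [hVsplit, Finset.sum_insert hrV']
  have hEn : ∀ F : ℕ → ℕ, (∑ v ∈ verts n (Finset.Icc 1 (r - 1)), F v)
      = F n + ∑ v ∈ Finset.Icc 1 (r - 1), F v := by
    intro F
    rw [show verts n (Finset.Icc 1 (r - 1)) = insert n (Finset.Icc 1 (r - 1)) from rfl,
      Finset.sum_insert hnnotI']
  have hPr : ∀ F : ℕ → MvPolynomial (Fin N) ℤ, (∏ v ∈ verts n (Finset.Icc 1 r), F v)
      = F r * ∏ v ∈ verts n (Finset.Icc 1 (r - 1)), F v := by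
    intro F; rw [hVsplit, Finset.prod_insert hrV']
  have hPn : ∀ F : ℕ → MvPolynomial (Fin N) ℤ, (∏ v ∈ verts n (Finset.Icc 1 (r - 1)), F v)
      = F n * ∏ v ∈ Finset.Icc 1 (r - 1), F v := by
    intro F
    rw [show verts n (Finset.Icc 1 (r - 1)) = insert n (Finset.Icc 1 (r - 1)) from rfl,
      Finset.prod_insert hnnotI']
  -- the product identity
  have hprod : ∀ γ : {x // x ∈ verts n (Finset.Icc 1 r)} → Finset (Fin N),
      IsProper n (Finset.Icc 1 r) h γ →
      (∏ v : {x // x ∈ verts n (Finset.Icc 1 r)}, ∏ a ∈ γ v,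
          (MvPolynomial.X a : MvPolynomial (Fin N) ℤ))
        = ∏ v : {x // x ∈ verts n (Finset.Icc 1 (r - 1))}, ∏ a ∈ fwdC n r γ v,
            MvPolynomial.X a := by
    intro γ hγ
    rw [prod_eq, prod_eq]
    rw [hPr (fun v => ∏ a ∈ ext γ v, MvPolynomial.X a),
      hPn (fun v => ∏ a ∈ ext γ v, MvPolynomial.X a),
      hPn (fun v => ∏ a ∈ ext (fwdC n r γ) v, MvPolynomial.X a)]
    rw [hext_fwd_n γ, Finset.prod_union (hdisj_rn γ hγ)]
    have hQ : (∏ v ∈ Finset.Icc 1 (r - 1), ∏ a ∈ ext (fwdC n r γ) v,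
        (MvPolynomial.X a : MvPolynomial (Fin N) ℤ))
        = ∏ v ∈ Finset.Icc 1 (r - 1), ∏ a ∈ ext γ v, MvPolynomial.X a := by
      refine Finset.prod_congr rfl fun v hv => ?_
      rw [Finset.mem_Icc] at hv
      rw [hext_fwd_lo γ v hv.1 hv.2]
    rw [hQ]
    ring
  -- the ascent identity
  have hasc : ∀ γ : {x // x ∈ verts n (Finset.Icc 1 r)} → Finset (Fin N),
      IsProper n (Finset.Icc 1 r) h γ →
      asc n (Finset.Icc 1 r) h γ
        = asc n (Finset.Icc 1 (r - 1)) h (fwdC n r γ) + cnt (ext γ r) (ext γ n) := by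
    intro γ hγ
    rw [asc_eq, asc_eq]
    -- the r-row contributes exactly the pair (r, n)
    have hrow : (∑ u ∈ verts n (Finset.Icc 1 r),
        if r < u ∧ u ≤ h r then cnt (ext γ r) (ext γ u) else 0) = cnt (ext γ r) (ext γ n) := by
      rw [hEr (fun u => if r < u ∧ u ≤ h r then cnt (ext γ r) (ext γ u) else 0)]
      rw [hEn (fun u => if r < u ∧ u ≤ h r then cnt (ext γ r) (ext γ u) else 0)]
      rw [if_neg (by omega : ¬ (r < r ∧ r ≤ h r)), if_pos ⟨hrn, by rw [htop]⟩]
      have hz : (∑ u ∈ Finset.Icc 1 (r - 1),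
          if r < u ∧ u ≤ h r then cnt (ext γ r) (ext γ u) else 0) = 0 := by
        refine Finset.sum_eq_zero fun u hu => ?_
        rw [Finset.mem_Icc] at hu
        exact if_neg (by omega)
      rw [hz]
      omega
    -- each other row gains the (v, r) term into the merged vertex
    have hstep : ∀ v ∈ verts n (Finset.Icc 1 (r - 1)),
        ((if v < r ∧ r ≤ h v then cnt (ext γ v) (ext γ r) else 0) +
          ∑ u ∈ verts n (Finset.Icc 1 (r - 1)),
            (if v < u ∧ u ≤ h v then cnt (ext γ v) (ext γ u) else 0))
          = ∑ u ∈ verts n (Finset.Icc 1 (r - 1)),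
              (if v < u ∧ u ≤ h v then cnt (ext (fwdC n r γ) v) (ext (fwdC n r γ) u) else 0) := by
      intro v hv
      rw [hEn (fun u => if v < u ∧ u ≤ h v then cnt (ext γ v) (ext γ u) else 0),
        hEn (fun u => if v < u ∧ u ≤ h v then cnt (ext (fwdC n r γ) v) (ext (fwdC n r γ) u) else 0)]
      by_cases hvn : v = n
      · have hz1 : (∑ u ∈ Finset.Icc 1 (r - 1),
            if v < u ∧ u ≤ h v then cnt (ext γ v) (ext γ u) else 0) = 0 :=
          Finset.sum_eq_zero fun u hu =>
            if_neg (by rw [Finset.mem_Icc] at hu; omega)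
        have hz2 : (∑ u ∈ Finset.Icc 1 (r - 1),
            if v < u ∧ u ≤ h v then cnt (ext (fwdC n r γ) v) (ext (fwdC n r γ) u) else 0) = 0 :=
          Finset.sum_eq_zero fun u hu =>
            if_neg (by rw [Finset.mem_Icc] at hu; omega)
        rw [hz1, hz2, if_neg (show ¬ (v < r ∧ r ≤ h v) by omega),
          if_neg (show ¬ (v < n ∧ n ≤ h v) by omega),
          if_neg (show ¬ (v < n ∧ n ≤ h v) by omega)]
      · rcases (hmemV' v).mp hv with h1 | h1
        · exact absurd h1 hvn
        have hfv : ext (fwdC n r γ) v = ext γ v := hext_fwd_lo γ v h1.1 h1.2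
        have hfn : ext (fwdC n r γ) n = ext γ r ∪ ext γ n := hext_fwd_n γ
        have hS : (∑ u ∈ Finset.Icc 1 (r - 1),
            if v < u ∧ u ≤ h v then cnt (ext (fwdC n r γ) v) (ext (fwdC n r γ) u) else 0)
            = ∑ u ∈ Finset.Icc 1 (r - 1),
                if v < u ∧ u ≤ h v then cnt (ext γ v) (ext γ u) else 0 := by
          refine Finset.sum_congr rfl fun u hu => ?_
          rw [Finset.mem_Icc] at hu
          rw [hfv, hext_fwd_lo γ u hu.1 hu.2]
        rw [hS, hfv, hfn]
        rcases hkey v h1.1 h1.2 with hk | hk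
        · rw [if_pos (by omega : v < r ∧ r ≤ h v), if_pos (by omega : v < n ∧ n ≤ h v),
            if_pos (by omega : v < n ∧ n ≤ h v), cnt_union (hdisj_rn γ hγ)]
          omega
        · rw [if_neg (by omega : ¬ (v < r ∧ r ≤ h v)),
            if_neg (by omega : ¬ (v < n ∧ n ≤ h v)),
            if_neg (by omega : ¬ (v < n ∧ n ≤ h v))]
          ring
    -- assemble
    rw [hEr (fun v => ∑ u ∈ verts n (Finset.Icc 1 r),
      if v < u ∧ u ≤ h v then cnt (ext γ v) (ext γ u) else 0)]
    rw [hrow]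
    have hmain : (∑ v ∈ verts n (Finset.Icc 1 (r - 1)), ∑ u ∈ verts n (Finset.Icc 1 r),
        if v < u ∧ u ≤ h v then cnt (ext γ v) (ext γ u) else 0)
        = ∑ v ∈ verts n (Finset.Icc 1 (r - 1)), ∑ u ∈ verts n (Finset.Icc 1 (r - 1)),
            if v < u ∧ u ≤ h v then cnt (ext (fwdC n r γ) v) (ext (fwdC n r γ) u) else 0 := by
      refine Finset.sum_congr rfl fun v hv => ?_
      rw [hEr (fun u => if v < u ∧ u ≤ h v then cnt (ext γ v) (ext γ u) else 0)]
      exact hstep v hv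
    rw [hmain]
    omega

  -- link between the pair count at (r,n) and the ascent statistic on the merged vertex
  have hcnt : ∀ γ : {x // x ∈ verts n (Finset.Icc 1 r)} → Finset (Fin N),
      IsProper n (Finset.Icc 1 r) h γ →
      cnt (ext γ r) (ext γ n)
        = ((fwdC n r γ ⟨n, hnV'⟩).filter fun b => fwda n r d γ < b).card := by
    intro γ hγ
    have e : fwdC n r γ ⟨n, hnV'⟩ = {fwda n r d γ} ∪ ext γ n := by
      rw [show fwdC n r γ ⟨n, hnV'⟩ = ext γ r ∪ ext γ n from if_pos rfl, hsing γ hγ]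
    rw [hsing γ hγ, cnt_singleton, e, filter_lt_singleton_union]
  -- rewrite the right-hand side as a sum over pairs (coloring, chosen color at n)
  have hRHS : qNum (MvPolynomial (Fin N) ℤ) (n - r + 1) * csf n (Finset.Icc 1 (r - 1)) h N
      = ∑ p ∈ (Finset.univ.filter
            (fun γ' : {x // x ∈ verts n (Finset.Icc 1 (r - 1))} → Finset (Fin N) =>
              IsProper n (Finset.Icc 1 (r - 1)) h γ')).sigma
            (fun γ' => γ' ⟨n, hnV'⟩),
          Polynomial.C (∏ v : {x // x ∈ verts n (Finset.Icc 1 (r - 1))}, ∏ a ∈ p.1 v,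
              MvPolynomial.X a) *
            Polynomial.X ^ (asc n (Finset.Icc 1 (r - 1)) h p.1 +
              ((p.1 ⟨n, hnV'⟩).filter fun b => p.2 < b).card) := by
    rw [csf, qNum, Finset.sum_mul_sum, Finset.sum_comm, Finset.sum_sigma]
    refine Finset.sum_congr rfl fun γ' hγ' => ?_
    have hp' : IsProper n (Finset.Icc 1 (r - 1)) h γ' := (Finset.mem_filter.mp hγ').2
    have hcard : (γ' ⟨n, hnV'⟩).card = n - r + 1 := by
      have hc : (γ' ⟨n, hnV'⟩).card = wt n (Finset.Icc 1 (r - 1)) n := hp'.1 ⟨n, hnV'⟩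
      rw [hc, hwt'n]
    calc (∑ i ∈ Finset.range (n - r + 1), Polynomial.X ^ i *
            (Polynomial.C (∏ v : {x // x ∈ verts n (Finset.Icc 1 (r - 1))}, ∏ a ∈ γ' v,
              MvPolynomial.X a) * Polynomial.X ^ asc n (Finset.Icc 1 (r - 1)) h γ'))
        = ∑ i ∈ Finset.range (γ' ⟨n, hnV'⟩).card,
            Polynomial.C (∏ v : {x // x ∈ verts n (Finset.Icc 1 (r - 1))}, ∏ a ∈ γ' v,
              MvPolynomial.X a) * Polynomial.X ^ (asc n (Finset.Icc 1 (r - 1)) h γ' + i) := by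
          rw [hcard]
          refine Finset.sum_congr rfl fun i _ => ?_
          rw [pow_add]
          ring
      _ = ∑ a ∈ γ' ⟨n, hnV'⟩,
            Polynomial.C (∏ v : {x // x ∈ verts n (Finset.Icc 1 (r - 1))}, ∏ b ∈ γ' v,
              MvPolynomial.X b) * Polynomial.X ^ (asc n (Finset.Icc 1 (r - 1)) h γ' +
                ((γ' ⟨n, hnV'⟩).filter fun b => a < b).card) :=
          (sum_filter_gt (γ' ⟨n, hnV'⟩) (fun i =>
            Polynomial.C (∏ v : {x // x ∈ verts n (Finset.Icc 1 (r - 1))}, ∏ b ∈ γ' v,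
              MvPolynomial.X b) * Polynomial.X ^ (asc n (Finset.Icc 1 (r - 1)) h γ' + i))).symm
  rw [hRHS, csf]
  refine Finset.sum_bij' (fun γ _ => ⟨fwdC n r γ, fwda n r d γ⟩)
    (fun p _ => bwdC n r p.1 p.2) ?_ ?_ ?_ ?_ ?_
  · -- forward map lands in the sigma set
    intro γ hγmem
    have hγp : IsProper n (Finset.Icc 1 r) h γ := (Finset.mem_filter.mp hγmem).2
    refine Finset.mem_sigma.mpr ⟨Finset.mem_filter.mpr ⟨Finset.mem_univ _, hfwd_proper γ hγp⟩, ?_⟩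
    show fwda n r d γ ∈ fwdC n r γ ⟨n, hnV'⟩
    have e : fwdC n r γ ⟨n, hnV'⟩ = ext γ r ∪ ext γ n := by simp [fwdC]
    rw [e, hsing γ hγp]
    exact Finset.mem_union_left _ (Finset.mem_singleton_self _)
  · -- backward map lands in the proper colorings
    intro p hp
    obtain ⟨hp1, hp2⟩ := Finset.mem_sigma.mp hp
    exact Finset.mem_filter.mpr ⟨Finset.mem_univ _,
      hbwd_proper p.1 p.2 (Finset.mem_filter.mp hp1).2 hp2⟩
  · -- left inverse
    intro γ hγmem
    have hγp : IsProper n (Finset.Icc 1 r) h γ := (Finset.mem_filter.mp hγmem).2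
    have hna : fwda n r d γ ∉ ext γ n := by
      have hdj := hdisj_rn γ hγp
      rw [hsing γ hγp] at hdj
      exact Finset.disjoint_singleton_left.mp hdj
    show bwdC n r (fwdC n r γ) (fwda n r d γ) = γ
    funext v
    by_cases hv : v.val = r
    · have e : bwdC n r (fwdC n r γ) (fwda n r d γ) v = {fwda n r d γ} := by
        simp [bwdC, hv]
      have e2 : ext γ v.val = γ v := ext_mem γ v.2
      rw [e, ← e2, hv, hsing γ hγp]
    · by_cases hv2 : v.val = n
      · have e : bwdC n r (fwdC n r γ) (fwda n r d γ) v
            = (ext (fwdC n r γ) n).erase (fwda n r d γ) := by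
          simp only [bwdC, if_neg hv, if_pos hv2]
        have e2 : ext γ v.val = γ v := ext_mem γ v.2
        rw [e, hext_fwd_n γ, hsing γ hγp, ← Finset.insert_eq ,Finset.erase_insert hna,
          ← e2, hv2]
      · have h1 : 1 ≤ v.val ∧ v.val ≤ r - 1 := by
          rcases (hmemV v.val).mp v.2 with h2 | h2
          · exact absurd h2 hv2
          · omega
        have e : bwdC n r (fwdC n r γ) (fwda n r d γ) v = ext (fwdC n r γ) v.val := by
          simp only [bwdC, if_neg hv, if_neg hv2]
        rw [e, hext_fwd_lo γ v.val h1.1 h1.2]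
        exact ext_mem γ v.2
  · -- right inverse
    intro p hp
    obtain ⟨γ', a⟩ := p
    obtain ⟨hp1, hp2⟩ := Finset.mem_sigma.mp hp
    show (⟨fwdC n r (bwdC n r γ' a), fwda n r d (bwdC n r γ' a)⟩ : Σ _ : {x // x ∈ verts n (Finset.Icc 1 (r - 1))} → Finset (Fin N), Fin N) = ⟨γ', a⟩
    have ha' : fwda n r d (bwdC n r γ' a) = a := by
      have hre : ext (bwdC n r γ' a) r = {a} := hext_bwd_r γ' a
      simp [fwda, hre]
    have haext : a ∈ ext γ' n := by rw [ext_mem γ' hnV']; exact hp2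
    have hγe : fwdC n r (bwdC n r γ' a) = γ' := by
      funext v
      by_cases hv : v.val = n
      · have e : fwdC n r (bwdC n r γ' a) v
            = ext (bwdC n r γ' a) r ∪ ext (bwdC n r γ' a) n := by
          simp [fwdC, hv]
        have e2 : ext γ' v.val = γ' v := ext_mem γ' v.2
        rw [e, hext_bwd_r, hext_bwd_n, ← Finset.insert_eq, Finset.insert_erase haext,
          ← e2, hv]
      · have h1 : 1 ≤ v.val ∧ v.val ≤ r - 1 := by
          rcases (hmemV' v.val).mp v.2 with h2 | h2
          · exact absurd h2 hv
          · exact h2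
        have e : fwdC n r (bwdC n r γ' a) v = ext (bwdC n r γ' a) v.val := by
          simp only [fwdC, if_neg hv]
        rw [e, hext_bwd_lo γ' a v.val h1.1 h1.2]
        exact ext_mem γ' v.2
    simp only [hγe, ha']
  · -- the summands agree
    intro γ hγmem
    have hγp : IsProper n (Finset.Icc 1 r) h γ := (Finset.mem_filter.mp hγmem).2
    dsimp only
    rw [hprod γ hγp, hasc γ hγp, hcnt γ hγp]
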